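/- arXiv:2308.04009 — 2 statements merged into one kernel-verified Lean document; each statement's English description precedes it below -/
import Mathlib

section
/- Let h : ℝⁿ → ℝ be continuously differentiable with 0-superlevel set C = {x : h(x) ≥ 0}, and let φ : [0, t_max) → ℝⁿ be a solution of ẋ = f(x) with φ(0) ∈ C. If there exists a locally Lipschitz α ∈ 𝒦∞ᵉ such that (d/dt) h(φ(t)) ≥ -α(h(φ(t))) for all t, then h(φ(t)) ≥ 0 for all t ∈ [0, t_max), i.e., C is forward invariant along φ. -/
/-!
Along the trajectory, `y t = h (φ t)` satisfies `y' ≥ -α y`, and `-α y > 0` wherever `y < 0`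
because `α` is strictly increasing with `α 0 = 0`. So `y` can never go negative: after the last
time `c` with `y c ≥ 0`, `y` would be negative and hence nondecreasing, so it could not drop
below `y c ≥ 0`.
-/

open Set

lemma exists_last_nonneg_of_continuousOn {y : ℝ → ℝ} {a b : ℝ} (hab : a ≤ b)
    (hy : ContinuousOn y (Icc a b)) (ha : 0 ≤ y a) :
    ∃ c ∈ Icc a b, 0 ≤ y c ∧ ∀ s ∈ Ioc c b, y s < 0 := by
  set S := Icc a b ∩ y ⁻¹' Ici 0
  have hS : IsCompact S := isCompact_Icc.of_isClosed_subset
    (hy.preimage_isClosed_of_isClosed isClosed_Icc isClosed_Ici) inter_subset_left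
  obtain ⟨hc_mem, hc_nonneg⟩ : sSup S ∈ S := hS.sSup_mem ⟨a, left_mem_Icc.2 hab, ha⟩
  refine ⟨sSup S, hc_mem, hc_nonneg, fun s hs => lt_of_not_ge fun hs_nonneg => ?_⟩
  have : s ≤ sSup S := le_csSup hS.bddAbove ⟨⟨hc_mem.1.trans hs.1.le, hs.2⟩, hs_nonneg⟩
  exact hs.1.not_ge this

lemma nonneg_of_hasDerivAt_nonneg_of_neg {y y' : ℝ → ℝ} {a b : ℝ} (hab : a ≤ b)
    (hy : ContinuousOn y (Icc a b)) (hy' : ∀ s ∈ Ioo a b, HasDerivAt y (y' s) s)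
    (hy'_nonneg : ∀ s ∈ Ioo a b, y s < 0 → 0 ≤ y' s) (ha : 0 ≤ y a) : 0 ≤ y b := by
  obtain ⟨c, ⟨hac, hcb⟩, hc, hneg⟩ := exists_last_nonneg_of_continuousOn hab hy ha
  rcases hcb.eq_or_lt with rfl | hcb
  · exact hc
  have hmono : MonotoneOn y (Icc c b) := by
    refine monotoneOn_of_hasDerivWithinAt_nonneg (f' := y') (convex_Icc c b)
      (hy.mono (Icc_subset_Icc_left hac)) ?_ ?_ <;> rw [interior_Icc]
    · exact fun s hs => (hy' s ⟨hac.trans_lt hs.1, hs.2⟩).hasDerivWithinAt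
    · exact fun s hs => hy'_nonneg s ⟨hac.trans_lt hs.1, hs.2⟩ (hneg s ⟨hs.1, hs.2.le⟩)
  exact hc.trans (hmono (left_mem_Icc.2 hcb.le) (right_mem_Icc.2 hcb.le) hcb.le)

theorem stmt_8_general (n : ℕ) (h : (Fin n → ℝ) → ℝ) (hreg : ContDiff ℝ 1 h)
    (f : (Fin n → ℝ) → (Fin n → ℝ)) (tmax : ℝ) (φ : ℝ → Fin n → ℝ)
    (hφ : ∀ t ∈ Set.Ico (0 : ℝ) tmax, HasDerivAt φ (f (φ t)) t)
    (hφ0 : 0 ≤ h (φ 0))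
    (α : ℝ → ℝ) (hα_mono : StrictMono α)
    (hα0 : α 0 = 0)
    (hbar : ∀ t ∈ Set.Ico (0 : ℝ) tmax,
      -α (h (φ t)) ≤ fderiv ℝ h (φ t) (f (φ t))) :
    ∀ t ∈ Set.Ico (0 : ℝ) tmax, 0 ≤ h (φ t) := by
  intro t ⟨ht0, httmax⟩
  have hsub : Icc 0 t ⊆ Ico 0 tmax := Icc_subset_Ico_right httmax
  have hderiv : ∀ s ∈ Ico 0 tmax,
      HasDerivAt (fun s => h (φ s)) (fderiv ℝ h (φ s) (f (φ s))) s :=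
    fun s hs => (hreg.differentiable one_ne_zero (φ s)).hasFDerivAt.comp_hasDerivAt s (hφ s hs)
  refine nonneg_of_hasDerivAt_nonneg_of_neg ht0
    (fun s hs => (hderiv s (hsub hs)).continuousAt.continuousWithinAt)
    (fun s hs => hderiv s (hsub (Ioo_subset_Icc_self hs))) (fun s hs hneg => ?_) hφ0
  have hα_neg : α (h (φ s)) < 0 := hα0 ▸ hα_mono hneg
  linarith [hbar s (hsub (Ioo_subset_Icc_self hs))]

/-- Barrier function forward invariance: if `h` is continuously differentiable,
`φ` solves `ẋ = f(x)` on `[0, t_max)` with `h(φ(0)) ≥ 0`, and there is a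
locally Lipschitz extended class-`𝒦∞` function `α` (strictly increasing,
continuous, `α 0 = 0`, unbounded above and below) such that
`(d/dt) h(φ(t)) = ∇h(φ(t))⋅f(φ(t)) ≥ -α(h(φ(t)))`, then `h(φ(t)) ≥ 0`
for all `t ∈ [0, t_max)`, i.e. `C = {x | h x ≥ 0}` is forward invariant. -/
theorem stmt_8 (n : ℕ) (h : (Fin n → ℝ) → ℝ) (hreg : ContDiff ℝ 1 h)
    (f : (Fin n → ℝ) → (Fin n → ℝ)) (tmax : ℝ) (φ : ℝ → Fin n → ℝ)
    (hφ : ∀ t ∈ Set.Ico (0 : ℝ) tmax, HasDerivAt φ (f (φ t)) t)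
    (hφ0 : 0 ≤ h (φ 0))
    (α : ℝ → ℝ) (hα_lip : LocallyLipschitz α) (hα_mono : StrictMono α)
    (hα_cont : Continuous α) (hα0 : α 0 = 0)
    (hα_top : Filter.Tendsto α Filter.atTop Filter.atTop)
    (hα_bot : Filter.Tendsto α Filter.atBot Filter.atBot)
    (hbar : ∀ t ∈ Set.Ico (0 : ℝ) tmax,
      -α (h (φ t)) ≤ fderiv ℝ h (φ t) (f (φ t))) :
    ∀ t ∈ Set.Ico (0 : ℝ) tmax, 0 ≤ h (φ t) :=
  stmt_8_general n h hreg f tmax φ hφ hφ0 α hα_mono hα0 hbar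
end

section
/- Let C = {x ∈ ℝⁿ : h(x) ≥ 0} for continuously differentiable h, and suppose k : ℝⁿ → ℝᵐ is a controller satisfying ∇h(x) · (f(x) + g(x)k(x)) ≥ -α(h(x)) for all x, with α ∈ 𝒦∞ᵉ locally Lipschitz and f, g, k locally Lipschitz. Then for any solution φ of the closed-loop system ẋ = f(x) + g(x)k(x) with φ(0) ∈ C, φ(t) ∈ C for all t in its maximal interval of existence. -/
open Matrix Set

attribute [local instance] Matrix.normedAddCommGroup Matrix.normedSpace

/-!
Along a solution `φ`, the scalar function `y = h ∘ φ` satisfies `y' ≥ -α(y)`, and `-α(y) ≥ 0`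
wherever `y < 0` since `α` is increasing with `α 0 = 0`. So `y` cannot decrease while it is
negative: after the last time `s` at which `y s ≥ 0`, the function `y` is monotone, which keeps
it nonnegative.
-/

theorem nonneg_of_deriv_nonneg_of_neg {y y' : ℝ → ℝ} {a b : ℝ} (hab : a ≤ b)
    (hc : ContinuousOn y (Icc a b)) (hd : ∀ t ∈ Ioo a b, HasDerivAt y (y' t) t)
    (hy' : ∀ t ∈ Ioo a b, y t < 0 → 0 ≤ y' t) (ha : 0 ≤ y a) : 0 ≤ y b := by
  by_contra! hb
  have hS : IsCompact (Icc a b ∩ y ⁻¹' Ici 0) :=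
    isCompact_Icc.of_isClosed_subset (hc.preimage_isClosed_of_isClosed isClosed_Icc isClosed_Ici)
      inter_subset_left
  obtain ⟨s, ⟨⟨has, hsb⟩, hys⟩, hlast⟩ := hS.exists_isGreatest ⟨a, ⟨le_rfl, hab⟩, ha⟩
  have hneg : ∀ t ∈ Ioc s b, y t < 0 := fun t ht => by
    by_contra! hyt
    exact ht.1.not_ge (hlast ⟨⟨has.trans ht.1.le, ht.2⟩, hyt⟩)
  have hmono : MonotoneOn y (Icc s b) := by
    refine monotoneOn_of_hasDerivWithinAt_nonneg (f' := y') (convex_Icc s b)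
      (hc.mono (Icc_subset_Icc_left has)) (fun t ht => ?_) (fun t ht => ?_) <;>
      rw [interior_Icc] at ht <;> have htab : t ∈ Ioo a b := ⟨has.trans_lt ht.1, ht.2⟩
    · exact (hd t htab).hasDerivWithinAt
    · exact hy' t htab (hneg t (Ioo_subset_Ioc_self ht))
  exact hb.not_ge (hys.trans (hmono ⟨le_rfl, hsb⟩ ⟨hsb, le_rfl⟩ hsb))

theorem stmt_15_general (n m : ℕ) (h : (Fin n → ℝ) → ℝ) (hreg : ContDiff ℝ 1 h)
    (f : (Fin n → ℝ) → (Fin n → ℝ)) (g : (Fin n → ℝ) → Matrix (Fin n) (Fin m) ℝ)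
    (k : (Fin n → ℝ) → (Fin m → ℝ))
    (α : ℝ → ℝ) (hα_mono : StrictMono α)
    (hα0 : α 0 = 0)
    (hsafe : ∀ x : Fin n → ℝ,
      -α (h x) ≤ fderiv ℝ h x (f x + (g x).mulVec (k x)))
    (tmax : ℝ) (φ : ℝ → Fin n → ℝ)
    (hφ : ∀ t ∈ Set.Ico (0 : ℝ) tmax,
      HasDerivAt φ (f (φ t) + (g (φ t)).mulVec (k (φ t))) t)
    (hφ0 : 0 ≤ h (φ 0)) :
    ∀ t ∈ Set.Ico (0 : ℝ) tmax, 0 ≤ h (φ t) := by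
  intro t ht
  have hy : ∀ s ∈ Icc 0 t,
      HasDerivAt (h ∘ φ) (fderiv ℝ h (φ s) (f (φ s) + (g (φ s)).mulVec (k (φ s)))) s :=
    fun s hs => ((hreg.differentiable one_ne_zero (φ s)).hasFDerivAt).comp_hasDerivAt s
      (hφ s ⟨hs.1, hs.2.trans_lt ht.2⟩)
  refine nonneg_of_deriv_nonneg_of_neg ht.1 (fun s hs => (hy s hs).continuousAt.continuousWithinAt)
    (fun s hs => hy s (Ioo_subset_Icc_self hs)) (fun s _ hs => ?_) hφ0
  have hα_neg : α (h (φ s)) ≤ 0 := hα0 ▸ hα_mono.monotone hs.le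
  linarith [hsafe (φ s)]

/-- CBF safety theorem: if the locally Lipschitz controller `k` satisfies
`∇h(x) ⋅ (f(x) + g(x) k(x)) ≥ -α(h(x))` for all `x`, with `α` an extended
class-`𝒦∞` function, then every solution `φ` of the closed-loop system
`ẋ = f(x) + g(x)k(x)` starting in `C = {x | h x ≥ 0}` stays in `C`. -/
theorem stmt_15 (n m : ℕ) (h : (Fin n → ℝ) → ℝ) (hreg : ContDiff ℝ 1 h)
    (f : (Fin n → ℝ) → (Fin n → ℝ)) (g : (Fin n → ℝ) → Matrix (Fin n) (Fin m) ℝ)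
    (k : (Fin n → ℝ) → (Fin m → ℝ))
    (hf : LocallyLipschitz f) (hg : LocallyLipschitz g) (hk : LocallyLipschitz k)
    (α : ℝ → ℝ) (hα_lip : LocallyLipschitz α) (hα_mono : StrictMono α)
    (hα_cont : Continuous α) (hα0 : α 0 = 0)
    (hα_top : Filter.Tendsto α Filter.atTop Filter.atTop)
    (hα_bot : Filter.Tendsto α Filter.atBot Filter.atBot)
    (hsafe : ∀ x : Fin n → ℝ,
      -α (h x) ≤ fderiv ℝ h x (f x + (g x).mulVec (k x)))
    (tmax : ℝ) (φ : ℝ → Fin n → ℝ)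
    (hφ : ∀ t ∈ Set.Ico (0 : ℝ) tmax,
      HasDerivAt φ (f (φ t) + (g (φ t)).mulVec (k (φ t))) t)
    (hφ0 : 0 ≤ h (φ 0)) :
    ∀ t ∈ Set.Ico (0 : ℝ) tmax, 0 ≤ h (φ t) :=
  stmt_15_general n m h hreg f g k α hα_mono hα0 hsafe tmax φ hφ hφ0
end
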